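/- Let f : ℂ → ℂ be entire of exponential type τ > 0, even, with f|ℝ Lebesgue integrable, and let m ≥ 1 be an integer. Then the limit lim_{ε→0⁺} [ ∫_ε^∞ f(x)/x^{2m} dx − Σ_{j=0}^{m−1} (f^{(2j)}(0)/((2j)!·(2m−2j−1))) · ε^{2j−2m+1} ] exists and is finite; i.e. the Hadamard finite part of the divergent integral ∫₀^∞ f(x)/x^{2m} dx exists. -/

import Mathlib

open MeasureTheory Filter Nat

/-!
Since `f` is entire and even, Taylor's theorem gives `f z = ∑_{j<m} a_j z^{2j} + z^{2m} F z`
with `a_j = f^{(2j)}(0)/(2j)!` and `F` continuous. On `(ε, 1]` the integrand is therefore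
`∑_{j<m} a_j x^{2j-2m} + F x`; the monomials integrate to exactly the subtracted terms
`a_j ε^{2j-2m+1}/(2m-2j-1)` plus constants, `∫_ε^1 F` converges to `∫_0^1 F` as `ε → 0⁺`,
and the tail `∫_1^∞ f x / x^{2m}` converges because `f` is integrable on `ℝ`. Evenness is what
removes the odd powers: the term `x^{-1}` would contribute `log ε`.
-/

open Set Topology

theorem Finset.sum_range_two_mul {M : Type*} [AddCommMonoid M] (n : ℕ) (f : ℕ → M) :
    ∑ i ∈ range (2 * n), f i = ∑ i ∈ range n, (f (2 * i) + f (2 * i + 1)) := by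
  induction n with
  | zero => simp
  | succ n ih =>
    rw [sum_range_succ, ← ih, show 2 * (n + 1) = 2 * n + 1 + 1 by ring, sum_range_succ,
      sum_range_succ, add_assoc]

section Taylor

variable {𝕜 E : Type*} [NontriviallyNormedField 𝕜] [CharZero 𝕜] [NormedAddCommGroup E]
  [NormedSpace 𝕜 E]

theorem Function.Even.iteratedDeriv_eq_zero_of_odd {f : 𝕜 → E} (hf : f.Even) {n : ℕ}
    (hn : Odd n) : iteratedDeriv n f 0 = 0 := by
  have h := iteratedDeriv_comp_neg n f 0
  rw [show (fun x ↦ f (-x)) = f from funext hf, neg_zero, hn.neg_one_pow, neg_one_smul] at h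
  have h2 : (2 : 𝕜) • iteratedDeriv n f 0 = 0 := by
    rw [two_smul]
    nth_rewrite 2 [h]
    exact add_neg_cancel _
  exact (smul_eq_zero.mp h2).resolve_left two_ne_zero

variable [CompleteSpace E]

theorem AnalyticAt.exists_continuous_eq_sum_add_pow_mul {f : 𝕜 → E} (hf : AnalyticAt 𝕜 f 0)
    (hfc : Continuous f) (n : ℕ) :
    ∃ F : 𝕜 → E, Continuous F ∧ ∀ z,
      f z = (∑ i ∈ .range n, (z ^ i / i !) • iteratedDeriv i f 0) + z ^ n • F z := by
  obtain ⟨F, hF0, hF⟩ := hf.exists_eq_sum_add_pow_mul n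
  refine ⟨F, continuous_iff_continuousAt.2 fun z ↦ ?_, hF⟩
  rcases eq_or_ne z 0 with rfl | hz
  · exact hF0.continuousAt
  have hquot : ContinuousAt (fun w ↦ (w ^ n)⁻¹ •
      (f w - ∑ i ∈ .range n, (w ^ i / i !) • iteratedDeriv i f 0)) z :=
    ((continuousAt_id.pow n).inv₀ (pow_ne_zero n hz)).smul (by fun_prop)
  refine hquot.congr ((eventually_ne_nhds hz).mono fun w hw ↦ ?_)
  dsimp only
  rw [hF w, add_sub_cancel_left, inv_smul_smul₀ (pow_ne_zero n hw)]

theorem Function.Even.exists_continuous_eq_sum_add_pow_mul {f : 𝕜 → E} (heven : f.Even)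
    (hf : AnalyticAt 𝕜 f 0) (hfc : Continuous f) (m : ℕ) :
    ∃ F : 𝕜 → E, Continuous F ∧ ∀ z, f z =
      (∑ j ∈ .range m, (z ^ (2 * j) / (2 * j)!) • iteratedDeriv (2 * j) f 0) +
        z ^ (2 * m) • F z := by
  obtain ⟨F, hF, hfF⟩ := hf.exists_continuous_eq_sum_add_pow_mul hfc (2 * m)
  refine ⟨F, hF, fun z ↦ ?_⟩
  rw [hfF z, Finset.sum_range_two_mul]
  simp only [heven.iteratedDeriv_eq_zero_of_odd (odd_two_mul_add_one _), smul_zero, add_zero]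

end Taylor

theorem MeasureTheory.IntegrableOn.div_ofReal_pow_Ioi {g : ℝ → ℂ} {a : ℝ}
    (hg : IntegrableOn g (Ioi a)) (ha : 0 < a) (n : ℕ) :
    IntegrableOn (fun x ↦ g x / (x : ℂ) ^ n) (Ioi a) := by
  simp_rw [div_eq_mul_inv]
  refine Integrable.mul_bdd (c := (a ^ n)⁻¹) hg
    (Complex.measurable_ofReal.pow_const n).inv.aestronglyMeasurable ?_
  refine ae_restrict_of_forall_mem measurableSet_Ioi fun x (hx : a < x) ↦ ?_
  rw [norm_inv, norm_pow, Complex.norm_real, Real.norm_of_nonneg (ha.trans hx).le]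
  exact inv_anti₀ (pow_pos ha n) (pow_le_pow_left₀ ha.le hx.le n)

theorem integral_ofReal_zpow {a b : ℝ} {n : ℤ}
    (h : 0 ≤ n ∨ n ≠ -1 ∧ (0 : ℝ) ∉ uIcc a b) :
    ∫ x in a..b, (x : ℂ) ^ n = ((b : ℂ) ^ (n + 1) - (a : ℂ) ^ (n + 1)) / (n + 1) := by
  simp_rw [← Complex.ofReal_zpow]
  rw [intervalIntegral.integral_ofReal, integral_zpow h]
  push_cast
  rfl

theorem intervalIntegrable_ofReal_zpow {a b : ℝ} (h : (0 : ℝ) ∉ uIcc a b) (n : ℤ) :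
    IntervalIntegrable (fun x : ℝ ↦ (x : ℂ) ^ n) volume a b :=
  (Complex.continuous_ofReal.continuousOn.zpow₀ n fun _ hx ↦
    Or.inl (Complex.ofReal_ne_zero.mpr (ne_of_mem_of_not_mem hx h))).intervalIntegrable

theorem tendsto_integral_left_nhdsGT {F : ℝ → ℂ} (hF : IntegrableOn F (Icc 0 1)) :
    Tendsto (fun ε ↦ ∫ x in ε..1, F x) (𝓝[>] 0) (𝓝 (∫ x in (0 : ℝ)..1, F x)) := by
  rw [← uIcc_of_le zero_le_one] at hF
  refine (intervalIntegral.continuousOn_primitive_interval_left hF 0 left_mem_uIcc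
    |>.mono_of_mem_nhdsWithin ?_)
  rw [uIcc_of_le zero_le_one]
  exact Icc_mem_nhdsGT one_pos

section FinitePart

variable {g F : ℝ → ℂ} {a : ℕ → ℂ} {m : ℕ}

theorem div_pow_eq_sum_zpow_add
    (hexp : ∀ x > 0, g x = ∑ j ∈ Finset.range m, a j * (x : ℂ) ^ (2 * j) +
      (x : ℂ) ^ (2 * m) * F x)
    {x : ℝ} (hx : 0 < x) :
    g x / (x : ℂ) ^ (2 * m) =
      ∑ j ∈ Finset.range m, a j * (x : ℂ) ^ (2 * (j : ℤ) - 2 * m) + F x := by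
  have hx0 : (x : ℂ) ≠ 0 := Complex.ofReal_ne_zero.mpr hx.ne'
  rw [hexp x hx, add_div, Finset.sum_div, mul_div_cancel_left₀ _ (pow_ne_zero _ hx0)]
  congr 1
  refine Finset.sum_congr rfl fun j _ ↦ ?_
  rw [mul_div_assoc, ← zpow_natCast, ← zpow_natCast, ← zpow_sub₀ hx0]
  push_cast
  rfl

theorem integral_sum_zpow {ε : ℝ} (hε : 0 < ε) :
    ∫ x in ε..1, ∑ j ∈ Finset.range m, a j * (x : ℂ) ^ (2 * (j : ℤ) - 2 * m) =
      ∑ j ∈ Finset.range m, a j / ((2 * m - 2 * j - 1 : ℕ) : ℂ) *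
        ((ε : ℂ) ^ (2 * (j : ℤ) - 2 * m + 1) - 1) := by
  have h0 : (0 : ℝ) ∉ uIcc ε 1 := notMem_uIcc_of_lt hε one_pos
  rw [intervalIntegral.integral_finsetSum fun j _ ↦
    ((intervalIntegrable_ofReal_zpow h0 _).const_mul (a j))]
  refine Finset.sum_congr rfl fun j hj ↦ ?_
  have hjm := Finset.mem_range.mp hj
  have hN : ((2 * m - 2 * j - 1 : ℕ) : ℂ) = -(((2 * (j : ℤ) - 2 * m : ℤ) : ℂ) + 1) := by
    rw [Nat.cast_sub (by omega), Nat.cast_sub (by omega)]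
    push_cast
    ring
  rw [intervalIntegral.integral_const_mul, integral_ofReal_zpow (Or.inr ⟨by omega, h0⟩), hN,
    div_neg, Complex.ofReal_one, one_zpow]
  ring

theorem integral_Ioi_div_pow_sub_sum_eq (hF : IntegrableOn F (Icc 0 1))
    (hg : ∀ ε > 0, IntegrableOn (fun x ↦ g x / (x : ℂ) ^ (2 * m)) (Ioi ε))
    (hexp : ∀ x > 0, g x = ∑ j ∈ Finset.range m, a j * (x : ℂ) ^ (2 * j) +
      (x : ℂ) ^ (2 * m) * F x)
    {ε : ℝ} (hε : ε ∈ Ioo 0 1) :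
    (∫ x in Ioi ε, g x / (x : ℂ) ^ (2 * m)) - ∑ j ∈ Finset.range m,
        a j / ((2 * m - 2 * j - 1 : ℕ) : ℂ) * (ε : ℂ) ^ (2 * (j : ℤ) - 2 * m + 1) =
      (∫ x in ε..1, F x) + ((∫ x in Ioi 1, g x / (x : ℂ) ^ (2 * m)) -
        ∑ j ∈ Finset.range m, a j / ((2 * m - 2 * j - 1 : ℕ) : ℂ)) := by
  have h0 : (0 : ℝ) ∉ uIcc ε 1 := notMem_uIcc_of_lt hε.1 one_pos
  have hsum : IntervalIntegrable
      (fun x : ℝ ↦ ∑ j ∈ Finset.range m, a j * (x : ℂ) ^ (2 * (j : ℤ) - 2 * m))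
      volume ε 1 := by
    simpa only [Finset.sum_fn] using IntervalIntegrable.sum (Finset.range m) fun j _ ↦
      (intervalIntegrable_ofReal_zpow h0 (2 * (j : ℤ) - 2 * m)).const_mul (a j)
  have hFε : IntervalIntegrable F volume ε 1 := by
    refine (hF.mono_set ?_).intervalIntegrable
    rw [uIcc_of_le hε.2.le]
    exact Icc_subset_Icc_left hε.1.le
  rw [← intervalIntegral.integral_interval_add_Ioi (hg ε hε.1) (hg 1 one_pos),
    intervalIntegral.integral_congr fun x hx ↦ div_pow_eq_sum_zpow_add hexp
      (hε.1.trans_le (uIcc_of_le hε.2.le ▸ hx).1),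
    intervalIntegral.integral_add hsum hFε, integral_sum_zpow hε.1]
  simp only [mul_sub, mul_one, Finset.sum_sub_distrib]
  ring

theorem exists_tendsto_integral_Ioi_div_pow_sub_sum (hF : IntegrableOn F (Icc 0 1))
    (hg : ∀ ε > 0, IntegrableOn (fun x ↦ g x / (x : ℂ) ^ (2 * m)) (Ioi ε))
    (hexp : ∀ x > 0, g x = ∑ j ∈ Finset.range m, a j * (x : ℂ) ^ (2 * j) +
      (x : ℂ) ^ (2 * m) * F x) :
    ∃ FP : ℂ, Tendsto (fun ε : ℝ ↦ (∫ x in Ioi ε, g x / (x : ℂ) ^ (2 * m)) -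
        ∑ j ∈ Finset.range m,
          a j / ((2 * m - 2 * j - 1 : ℕ) : ℂ) * (ε : ℂ) ^ (2 * (j : ℤ) - 2 * m + 1))
      (𝓝[>] 0) (𝓝 FP) :=
  ⟨_, ((tendsto_integral_left_nhdsGT hF).add_const _).congr' <|
    eventually_of_mem (Ioo_mem_nhdsGT one_pos) fun _ hε ↦
      (integral_Ioi_div_pow_sub_sum_eq hF hg hexp hε).symm⟩

end FinitePart

theorem hadamard_finite_part_exists_general
    (f : ℂ → ℂ)
    (hf : Differentiable ℂ f)
    (heven : ∀ z : ℂ, f (-z) = f z)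
    (hint : Integrable (fun x : ℝ => f x))
    (m : ℕ) :
    ∃ FP : ℂ,
      Tendsto
        (fun ε : ℝ =>
          (∫ x in Set.Ioi ε, f x / (x : ℂ) ^ (2 * m)) -
            ∑ j ∈ Finset.range m,
              (iteratedDeriv (2 * j) f 0 /
                  (((2 * j)! : ℂ) * ((2 * m - 2 * j - 1 : ℕ) : ℂ))) *
                ((ε : ℂ) ^ (2 * (j : ℤ) - 2 * (m : ℤ) + 1)))
        (nhdsWithin 0 (Set.Ioi 0)) (nhds FP) := by
  obtain ⟨F, hF, hfF⟩ :=
    Function.Even.exists_continuous_eq_sum_add_pow_mul heven (hf.analyticAt 0) hf.continuous m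
  have hexp : ∀ x : ℝ, f x = ∑ j ∈ Finset.range m,
      iteratedDeriv (2 * j) f 0 / ((2 * j)! : ℂ) * (x : ℂ) ^ (2 * j) +
        (x : ℂ) ^ (2 * m) * F x := fun x ↦ by
    rw [hfF, smul_eq_mul]
    congr 1
    exact Finset.sum_congr rfl fun j _ ↦ by rw [smul_eq_mul]; ring
  simpa only [div_div] using exists_tendsto_integral_Ioi_div_pow_sub_sum
    (hF.comp Complex.continuous_ofReal).integrableOn_Icc
    (fun ε hε ↦ IntegrableOn.div_ofReal_pow_Ioi hint.integrableOn hε _) fun x _ ↦ hexp x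

/-- Existence of the Hadamard finite part of the divergent integral `∫₀^∞ f(x)/x^{2m} dx`
for an even entire function `f` of exponential type `τ > 0` integrable on `ℝ`. -/
theorem hadamard_finite_part_exists
    (f : ℂ → ℂ) (τ : ℝ) (hτ : 0 < τ)
    (hf : Differentiable ℂ f)
    (htype : ∀ ε > 0, ∃ C > 0, ∀ z : ℂ, ‖f z‖ ≤ C * Real.exp ((τ + ε) * ‖z‖))
    (heven : ∀ z : ℂ, f (-z) = f z)
    (hint : Integrable (fun x : ℝ => f x))
    (m : ℕ) (hm : 1 ≤ m) :
    ∃ FP : ℂ,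
      Tendsto
        (fun ε : ℝ =>
          (∫ x in Set.Ioi ε, f x / (x : ℂ) ^ (2 * m)) -
            ∑ j ∈ Finset.range m,
              (iteratedDeriv (2 * j) f 0 /
                  (((2 * j)! : ℂ) * ((2 * m - 2 * j - 1 : ℕ) : ℂ))) *
                ((ε : ℂ) ^ (2 * (j : ℤ) - 2 * (m : ℤ) + 1)))
        (nhdsWithin 0 (Set.Ioi 0)) (nhds FP) :=
  hadamard_finite_part_exists_general f hf heven hint m
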